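/- arXiv:0707.1309 — 3 statements merged into one kernel-verified Lean document; each statement's English description precedes it below -/
import Mathlib

section
/- A finite connected multigraph G has an even number of spanning trees if and only if G has an Eulerian cut, i.e., a nonempty edge cut in which every vertex has even degree (equivalently, a partition of V(G) into nonempty sets X, X' such that every vertex has an even number of edges crossing the partition). -/
open scoped Classical
open Finset

/-- A finite multigraph without loops: edges are given with an (arbitrary) orientation
`ends e = (o, t)`; connectivity is expressed by saying that the only vertex sets with
no crossing edges are `∅` and `univ`. -/
structure Multigraph where
  V : Type
  E : Type
  [fintV : Fintype V]
  [decV : DecidableEq V]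
  [fintE : Fintype E]
  [decE : DecidableEq E]
  [nonemptyV : Nonempty V]
  ends : E → V × V
  loopless : ∀ e, (ends e).1 ≠ (ends e).2
  conn : ∀ S : Finset V, (∀ e, ((ends e).1 ∈ S ↔ (ends e).2 ∈ S)) → S = ∅ ∨ S = Finset.univ

attribute [instance] Multigraph.fintV Multigraph.decV Multigraph.fintE Multigraph.decE
  Multigraph.nonemptyV

/-- `x` is an endpoint of the edge `e`. -/
def Multigraph.Inc (G : Multigraph) (x : G.V) (e : G.E) : Prop :=
  (G.ends e).1 = x ∨ (G.ends e).2 = x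

/-- The endpoint of `e` other than `x`. -/
noncomputable def Multigraph.other (G : Multigraph) (x : G.V) (e : G.E) : G.V :=
  if (G.ends e).1 = x then (G.ends e).2 else (G.ends e).1

/-- The degree of a vertex. -/
noncomputable def Multigraph.deg (G : Multigraph) (x : G.V) : ℕ :=
  (Finset.univ.filter (fun e => G.Inc x e)).card

/-- The genus (cyclomatic number) `|E| - |V| + 1` of a graph. -/
noncomputable def genus (G : Multigraph) : ℤ :=
  (Fintype.card G.E : ℤ) - (Fintype.card G.V : ℤ) + 1

/-- The graph Laplacian `div(f)` of an integer-valued function on vertices. -/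
noncomputable def lap (G : Multigraph) (f : G.V → ℤ) : G.V → ℤ :=
  fun x => ∑ e ∈ Finset.univ.filter (fun e => G.Inc x e), (f x - f (G.other x e))

/-- A divisor is principal if it is the Laplacian of some function. -/
def IsPrincipal (G : Multigraph) (D : G.V → ℤ) : Prop := ∃ f, D = lap G f

/-- Linear equivalence of divisors. -/
def LinEquiv (G : Multigraph) (D D' : G.V → ℤ) : Prop := ∃ f, D - D' = lap G f

/-- `r(D) ≥ k`: every effective divisor of degree `k` can be subtracted from `D`
leaving a divisor equivalent to an effective one. -/
def RankGE (G : Multigraph) (D : G.V → ℤ) (k : ℕ) : Prop :=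
  ∀ E : G.V → ℤ, (∀ x, 0 ≤ E x) → (∑ x, E x) = (k : ℤ) →
    ∃ F : G.V → ℤ, (∀ x, 0 ≤ F x) ∧ LinEquiv G (D - E) F

/-- The Baker–Norine rank of a divisor (with `r(D) = -1` when `|D| = ∅`). -/
noncomputable def rank (G : Multigraph) (D : G.V → ℤ) : ℤ :=
  sSup {r : ℤ | r = -1 ∨ ∃ n : ℕ, r = (n : ℤ) ∧ RankGE G D n}

/-- The canonical divisor `K_G = Σ (deg x - 2)(x)`. -/
noncomputable def canonical (G : Multigraph) : G.V → ℤ := fun x => (G.deg x : ℤ) - 2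

/-- `f` is harmonic at `x` (values in an abelian group). -/
def HarmonicAt (G : Multigraph) (A : Type*) [AddCommGroup A] (f : G.V → A) (x : G.V) : Prop :=
  ∑ e ∈ Finset.univ.filter (fun e => G.Inc x e), (f x - f (G.other x e)) = 0

/-- A morphism of multigraphs: vertices go to vertices, and each edge goes either to an
edge incident to the images of its endpoints, or to the common image of its endpoints. -/
structure Morphism (G G' : Multigraph) where
  vmap : G.V → G'.V
  emap : G.E → G'.E ⊕ G'.V
  compat : ∀ e x, G.Inc x e →
    Sum.elim (fun e' => G'.Inc (vmap x) e') (fun v' => vmap x = v') (emap e)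

variable {G G' : Multigraph}

/-- The number of edges at `x` mapping to the edge `e'`. -/
noncomputable def preCount (φ : Morphism G G') (x : G.V) (e' : G'.E) : ℕ :=
  (Finset.univ.filter (fun e => G.Inc x e ∧ φ.emap e = Sum.inl e')).card

/-- Harmonicity (horizontal conformality) of a morphism. -/
def IsHarmonic (φ : Morphism G G') : Prop :=
  ∀ (x : G.V) (e₁ e₂ : G'.E), G'.Inc (φ.vmap x) e₁ → G'.Inc (φ.vmap x) e₂ →
    preCount φ x e₁ = preCount φ x e₂

/-- The horizontal multiplicity `m_φ(x)` (equal to `preCount φ x e'` for any edge `e'`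
incident to `φ(x)` when `φ` is harmonic; `0` if there is no such edge). -/
noncomputable def hmult (φ : Morphism G G') (x : G.V) : ℕ :=
  if h : ∃ e' : G'.E, G'.Inc (φ.vmap x) e' then preCount φ x h.choose else 0

/-- The vertical multiplicity `v_φ(x)`: the number of edges at `x` collapsed to a vertex. -/
noncomputable def vmult (φ : Morphism G G') (x : G.V) : ℕ :=
  (Finset.univ.filter (fun e => G.Inc x e ∧ (φ.emap e).isRight = true)).card

/-- The number of edges of `G` mapping to a given edge `e'` of `G'`. -/
noncomputable def edgeCount (φ : Morphism G G') (e' : G'.E) : ℕ :=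
  (Finset.univ.filter (fun e => φ.emap e = Sum.inl e')).card

/-- The degree of a harmonic morphism: the common number of edge preimages of any edge
of `G'` (and `0` if `G'` has no edges). -/
noncomputable def mdeg (φ : Morphism G G') : ℕ :=
  if h : Nonempty G'.E then edgeCount φ h.some else 0

/-- Push-forward of divisors. -/
noncomputable def pushDiv (φ : Morphism G G') (D : G.V → ℤ) : G'.V → ℤ :=
  fun y => ∑ x ∈ Finset.univ.filter (fun x => φ.vmap x = y), D x

/-- Pullback of divisors, weighted by horizontal multiplicities. -/
noncomputable def pullDiv (φ : Morphism G G') (D' : G'.V → ℤ) : G.V → ℤ :=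
  fun x => (hmult φ x : ℤ) * D' (φ.vmap x)

/-- A spanning tree: a set of edges of size `|V| - 1` spanning a connected subgraph. -/
def IsSpanningTree (G : Multigraph) (T : Finset G.E) : Prop :=
  (∀ S : Finset G.V, (∀ e ∈ T, ((G.ends e).1 ∈ S ↔ (G.ends e).2 ∈ S)) → S = ∅ ∨ S = Finset.univ)
  ∧ T.card + 1 = Fintype.card G.V

/-- The number of spanning trees of `G`. -/
noncomputable def numSpanningTrees (G : Multigraph) : ℕ :=
  (Finset.univ.filter (fun T => IsSpanningTree G T)).card

/-- The edge `e` crosses the vertex set `X`. -/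
def Crosses (G : Multigraph) (X : Finset G.V) (e : G.E) : Prop :=
  ¬(((G.ends e).1 ∈ X) ↔ ((G.ends e).2 ∈ X))

/-- `G` has a nonempty edge cut in which every vertex has even degree. -/
def HasEulerianCut (G : Multigraph) : Prop :=
  ∃ X : Finset G.V, X ≠ ∅ ∧ X ≠ Finset.univ ∧ (∃ e, Crosses G X e) ∧
    ∀ x : G.V, Even ((Finset.univ.filter (fun e => G.Inc x e ∧ Crosses G X e)).card)

/-- A harmonic 1-form (flow): zero net flow at every vertex. The value `ω e` is the value
on the directed edge given by the chosen orientation; the reverse edge carries `-ω e`. -/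
def IsFlow (G : Multigraph) (ω : G.E → ℝ) : Prop :=
  ∀ x : G.V,
    (∑ e, ((if (G.ends e).2 = x then ω e else 0) - (if (G.ends e).1 = x then ω e else 0))) = 0

/-- Pullback of a 1-form: `ω'(φ(e))` on horizontal edges (with a sign recording whether
orientation is preserved) and `0` on vertical edges. -/
noncomputable def pullForm (φ : Morphism G G') (ω' : G'.E → ℝ) : G.E → ℝ :=
  fun e => Sum.elim
    (fun e' => if G'.ends e' = (φ.vmap (G.ends e).1, φ.vmap (G.ends e).2) then ω' e' else -ω' e')
    (fun _ => 0) (φ.emap e)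

/-- Push-forward (trace) of a 1-form: `(φ_*ω)(e') = Σ_{φ(e)=e'} ω(e)` (as directed edges). -/
noncomputable def pushForm (φ : Morphism G G') (ω : G.E → ℝ) : G'.E → ℝ :=
  fun e' => ∑ e ∈ Finset.univ.filter (fun e => φ.emap e = Sum.inl e'),
    (if G'.ends e' = (φ.vmap (G.ends e).1, φ.vmap (G.ends e).2) then ω e else -ω e)

/-- An automorphism of a multigraph. -/
structure GraphAut (G : Multigraph) where
  vmap : G.V ≃ G.V
  emap : G.E ≃ G.E
  compat : ∀ e, G.ends (emap e) = (vmap (G.ends e).1, vmap (G.ends e).2) ∨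
                G.ends (emap e) = (vmap (G.ends e).2, vmap (G.ends e).1)

/-- The action of an automorphism on 1-forms: `(α*ω)(e) = ω(α(e))` as directed edges. -/
noncomputable def autPullForm {G : Multigraph} (α : GraphAut G) (ω : G.E → ℝ) : G.E → ℝ :=
  fun e => if G.ends (α.emap e) = (α.vmap (G.ends e).1, α.vmap (G.ends e).2)
           then ω (α.emap e) else -ω (α.emap e)

/-- `G` stays connected after deleting any one edge. -/
def TwoEdgeConnected (G : Multigraph) : Prop :=
  ∀ e₀ : G.E, ∀ S : Finset G.V,
    (∀ e, e ≠ e₀ → ((G.ends e).1 ∈ S ↔ (G.ends e).2 ∈ S)) → S = ∅ ∨ S = Finset.univ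

/-- `G` stays connected after deleting any two edges. -/
def ThreeEdgeConnected (G : Multigraph) : Prop :=
  ∀ e₁ e₂ : G.E, ∀ S : Finset G.V,
    (∀ e, e ≠ e₁ → e ≠ e₂ → ((G.ends e).1 ∈ S ↔ (G.ends e).2 ∈ S)) → S = ∅ ∨ S = Finset.univ

/-- The graph `B₂`: two vertices joined by two parallel edges. -/
noncomputable def B2 : Multigraph where
  V := Bool
  E := Bool
  ends := fun _ => (false, true)
  loopless := by decide
  conn := by decide

/-!
Work over `𝔽₂` with the incidence matrix `M` of `G` with the row of a root `r` deleted. By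
Cauchy–Binet, `det (M Mᵀ) = ∑_T (det M_T)²`, where `T` runs over the edge sets of size `|V| - 1`,
and over `𝔽₂` the minor `det M_T` is `1` exactly when `T` is a spanning tree; hence
`κ_G ≡ det (M Mᵀ) (mod 2)`. On the other hand a vector `x ≠ 0` of `𝔽₂^{V - r}` is the indicator of a
nonempty set `X ∌ r`, the vector `xᵀ M` is the indicator of the cut of `X`, and `xᵀ M Mᵀ = 0` says
that every vertex other than `r` meets an even number of cut edges; by the handshake lemma so
does `r`. So `det (M Mᵀ) = 0` iff `G` has an Eulerian cut.
-/

open Matrix Equiv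

theorem Function.Injective.exists_perm_eq_comp {n m : Type*} [Fintype n] [DecidableEq m]
    {f g : n → m} (hf : Function.Injective f) (hg : Function.Injective g)
    (h : univ.image f = univ.image g) : ∃ σ : Perm n, f = g ∘ σ := by
  have hrange : Set.range f = Set.range g := by
    simpa [← coe_inj, coe_image] using h
  refine ⟨(ofInjective f hf).trans ((setCongr hrange).trans (ofInjective g hg).symm),
    funext fun i => ?_⟩
  simp [apply_ofInjective_symm]

namespace Matrix

variable {R n m : Type*} [CommRing R] [Fintype n] [DecidableEq n] [Fintype m] [DecidableEq m]

omit [DecidableEq m] in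
theorem det_mul_eq_sum_prod_mul_det (A : Matrix n m R) (B : Matrix m n R) :
    (A * B).det = ∑ f : n → m, (∏ i, A i (f i)) * (B.submatrix f id).det := by
  have hB (f : n → m) : (B.submatrix f id).det =
      ∑ σ : Perm n, ((Perm.sign σ : ℤ) : R) * ∏ i, B (f i) (σ i) := by
    rw [← det_transpose, det_apply']; rfl
  rw [← det_transpose, det_apply']
  simp only [transpose_apply, mul_apply, prod_univ_sum, Fintype.piFinset_univ, mul_sum, hB,
    prod_mul_distrib]
  rw [sum_comm]
  exact sum_congr rfl fun f _ => sum_congr rfl fun σ _ => by ring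

theorem sum_prod_mul_det_eq_zero_of_card_ne (A : Matrix n m R) (B : Matrix m n R) {T : Finset m}
    (hT : #T ≠ Fintype.card n) :
    ∑ f with univ.image f = T, (∏ i, A i (f i)) * (B.submatrix f id).det = 0 := by
  refine sum_eq_zero fun f hf => ?_
  obtain ⟨i, j, hfij, hij⟩ := Function.not_injective_iff.mp fun hinj =>
    hT (by rw [← (mem_filter.mp hf).2, card_image_of_injective _ hinj, card_univ])
  rw [det_zero_of_row_eq hij (by ext; simp [hfij]), mul_zero]

theorem sum_prod_mul_det_eq_det_mul_det (A : Matrix n m R) (B : Matrix m n R) {g : n → m}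
    (hg : Function.Injective g) :
    ∑ f with univ.image f = univ.image g, (∏ i, A i (f i)) * (B.submatrix f id).det =
      (A.submatrix id g).det * (B.submatrix g id).det := by
  have hfiber : ({f | univ.image f = univ.image g} : Finset (n → m)) =
      univ.image fun σ : Perm n => g ∘ σ := by
    ext f
    simp only [mem_filter, mem_univ, true_and, mem_image]
    constructor
    · intro h
      have hf : Function.Injective f := by
        rw [← Set.injOn_univ, ← coe_univ, ← card_image_iff, h, card_image_of_injective _ hg]
      obtain ⟨σ, rfl⟩ := hf.exists_perm_eq_comp hg h
      exact ⟨σ, rfl⟩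
    · rintro ⟨σ, rfl⟩
      ext x
      simp only [mem_image, mem_univ, true_and, Function.comp_apply]
      exact ⟨fun ⟨i, hi⟩ => ⟨σ i, hi⟩,
        fun ⟨i, hi⟩ => ⟨σ.symm i, by simpa using hi⟩⟩
  have hinj : Set.InjOn (fun σ : Perm n => g ∘ σ) (univ : Finset (Perm n)) := fun σ _ τ _ h =>
    Perm.ext fun i => hg (congrFun h i)
  have hA : (A.submatrix id g).det =
      ∑ σ : Perm n, ((Perm.sign σ : ℤ) : R) * ∏ i, A i (g (σ i)) := by
    rw [← det_transpose, det_apply']; rfl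
  rw [hfiber, sum_image hinj, hA, sum_mul]
  refine sum_congr rfl fun σ _ => ?_
  rw [show B.submatrix (g ∘ σ) id = (B.submatrix g id).submatrix σ id from rfl, det_permute]
  simp only [Function.comp_apply]
  ring

end Matrix

section RootedSets

variable {V : Type*} [Fintype V] [DecidableEq V]

theorem exists_proper_iff_exists_notMem {P : Finset V → Prop} (hP : ∀ X, P Xᶜ ↔ P X)
    (r : V) :
    (∃ X, X ≠ ∅ ∧ X ≠ univ ∧ P X) ↔ ∃ X, r ∉ X ∧ X ≠ ∅ ∧ P X := by
  constructor
  · rintro ⟨X, hX, hXu, hPX⟩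
    by_cases hr : r ∈ X
    · exact ⟨Xᶜ, by simpa using hr, by simpa [compl_eq_empty_iff] using hXu, (hP X).2 hPX⟩
    · exact ⟨X, hr, hX, hPX⟩
  · rintro ⟨X, hr, hX, hPX⟩
    exact ⟨X, hX, fun h => hr (h ▸ mem_univ r), hPX⟩

theorem exists_ne_zero_iff_exists_indicator (r : V) (Q : ({v // v ≠ r} → ZMod 2) → Prop) :
    (∃ x ≠ 0, Q x) ↔
      ∃ X : Finset V, r ∉ X ∧ X ≠ ∅ ∧ Q fun w => if ↑w ∈ X then 1 else 0 := by
  constructor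
  · rintro ⟨x, hx, hQ⟩
    have h01 : ∀ a : ZMod 2, a = 0 ∨ a = 1 := by decide
    refine ⟨({v | ∃ h : v ≠ r, x ⟨v, h⟩ = 1} : Finset V), by simp, ?_, ?_⟩
    · obtain ⟨w, hw⟩ := Function.ne_iff.mp hx
      exact ne_empty_of_mem (a := w.1) (by simpa [w.2] using (h01 (x w)).resolve_left hw)
    · convert hQ using 1
      ext w
      rcases h01 (x w) with h | h <;> simp [w.2, h]
  · rintro ⟨X, hr, hX, hQ⟩
    refine ⟨_, fun h => ?_, hQ⟩
    obtain ⟨v, hv⟩ := nonempty_iff_ne_empty.mpr hX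
    have := congrFun h ⟨v, fun h => hr (h ▸ hv)⟩
    simp [hv] at this

theorem Fintype.card_subtype_ne_add_one (r : V) :
    Fintype.card {v // v ≠ r} + 1 = Fintype.card V := by
  rw [Fintype.card_subtype_compl, Fintype.card_subtype_eq]
  have := Fintype.card_pos_iff.mpr ⟨r⟩
  omega

end RootedSets

namespace Multigraph

noncomputable section

variable (G) in
def incMatrix : Matrix G.V G.E (ZMod 2) := Matrix.of fun v e => if G.Inc v e then 1 else 0

variable (G) in
def cutDegree (X : Finset G.V) (v : G.V) : ℕ := #{e | G.Inc v e ∧ Crosses G X e}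

theorem crosses_compl {X : Finset G.V} {e : G.E} : Crosses G Xᶜ e ↔ Crosses G X e := by
  simp only [Crosses, mem_compl, not_iff_not]

theorem exists_crosses {X : Finset G.V} (hX : X ≠ ∅) (hXu : X ≠ univ) :
    ∃ e, Crosses G X e := by
  by_contra! h
  simp only [Crosses, not_not] at h
  exact (G.conn X h).elim hX hXu

theorem indicator_vecMul_incMatrix (X : Finset G.V) :
    (fun v => if v ∈ X then 1 else 0) ᵥ* G.incMatrix =
      fun e => if Crosses G X e then 1 else 0 := by
  ext e
  have hinc (v : G.V) : (if G.Inc v e then (1 : ZMod 2) else 0) =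
      (if (G.ends e).1 = v then 1 else 0) + (if (G.ends e).2 = v then 1 else 0) := by
    have := G.loopless e
    by_cases h1 : (G.ends e).1 = v <;> by_cases h2 : (G.ends e).2 = v <;>
      simp_all [Inc]
  simp only [Matrix.vecMul, dotProduct, incMatrix, Matrix.of_apply, hinc, mul_add, sum_add_distrib,
    mul_ite, mul_one, mul_zero, sum_ite_eq]
  by_cases h1 : (G.ends e).1 ∈ X <;> by_cases h2 : (G.ends e).2 ∈ X <;> simp [Crosses, h1, h2]
  decide

theorem incMatrix_mulVec_crosses (X : Finset G.V) (v : G.V) :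
    (G.incMatrix *ᵥ fun e => if Crosses G X e then 1 else 0) v = (G.cutDegree X v : ZMod 2) := by
  simp only [Matrix.mulVec, dotProduct, incMatrix, Matrix.of_apply, ite_zero_mul_ite_zero, mul_one,
    cutDegree, natCast_card_filter]

theorem sum_natCast_cutDegree_eq_zero (X : Finset G.V) : ∑ v, (G.cutDegree X v : ZMod 2) = 0 := by
  have hone : (1 : G.V → ZMod 2) = fun v => if v ∈ univ then 1 else 0 :=
    funext fun v => (if_pos (mem_univ v)).symm
  simp only [← incMatrix_mulVec_crosses, ← one_dotProduct, Matrix.dotProduct_mulVec, hone,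
    indicator_vecMul_incMatrix]
  simp [Crosses]

theorem even_cutDegree_of_forall_ne {X : Finset G.V} {r : G.V}
    (h : ∀ v ≠ r, Even (G.cutDegree X v)) : Even (G.cutDegree X r) := by
  have hrest : ∑ w : {v // v ≠ r}, (G.cutDegree X w : ZMod 2) = 0 :=
    sum_eq_zero fun w _ => ZMod.natCast_eq_zero_iff_even.mpr (h w w.2)
  have hsum := sum_natCast_cutDegree_eq_zero X
  rwa [Fintype.sum_eq_add_sum_subtype_ne _ r, hrest, add_zero,
    ZMod.natCast_eq_zero_iff_even] at hsum

theorem hasEulerianCut_iff (r : G.V) :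
    HasEulerianCut G ↔ ∃ X, r ∉ X ∧ X ≠ ∅ ∧ ∀ v ≠ r, Even (G.cutDegree X v) := by
  rw [HasEulerianCut, exists_proper_iff_exists_notMem (fun X => by simp only [crosses_compl]) r]
  refine exists_congr fun X => and_congr_right fun hr => and_congr_right fun hX => ?_
  refine ⟨fun h v _ => h.2 v, fun h => ⟨exists_crosses hX fun hu => hr (hu ▸ mem_univ r),
    fun v => ?_⟩⟩
  by_cases hv : v = r
  · exact hv ▸ even_cutDegree_of_forall_ne h
  · exact h v hv

variable (G) in
def redIncMatrix (r : G.V) : Matrix {v // v ≠ r} G.E (ZMod 2) :=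
  G.incMatrix.submatrix Subtype.val id

theorem indicator_vecMul_redIncMatrix {r : G.V} {X : Finset G.V} (hr : r ∉ X) :
    (fun w : {v // v ≠ r} => if ↑w ∈ X then 1 else 0) ᵥ* G.redIncMatrix r =
      fun e => if Crosses G X e then 1 else 0 := by
  rw [← indicator_vecMul_incMatrix]
  ext e
  simp only [vecMul, dotProduct, redIncMatrix, submatrix_apply, id]
  rw [Fintype.sum_eq_add_sum_subtype_ne _ r, if_neg hr, zero_mul, zero_add]

theorem isSpanningTree_image_iff {r : G.V} {g : {v // v ≠ r} → G.E}
    (hg : Function.Injective g) :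
    IsSpanningTree G (univ.image g) ↔ ((G.redIncMatrix r).submatrix id g).det ≠ 0 := by
  have hconn {P : Finset G.V → Prop} : (∀ S, P S → S = ∅ ∨ S = univ) ↔
      ¬∃ S, S ≠ ∅ ∧ S ≠ univ ∧ P S := by
    simp only [not_exists, not_and, or_iff_not_imp_left]
    exact forall_congr' fun S => ⟨fun h hS hne hP => hne (h hP hS), fun h hP hS => by tauto⟩
  rw [IsSpanningTree, card_image_of_injective _ hg, card_univ, Fintype.card_subtype_ne_add_one,
    and_iff_left rfl, hconn, Ne,
    ← exists_vecMul_eq_zero_iff, exists_ne_zero_iff_exists_indicator,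
    exists_proper_iff_exists_notMem (fun S => by simp only [mem_compl, not_iff_not]) r]
  refine not_congr <| exists_congr fun X => and_congr_right fun hr => and_congr_right fun _ => ?_
  have hvecMul : (fun w : {v // v ≠ r} => if ↑w ∈ X then 1 else 0) ᵥ*
      (G.redIncMatrix r).submatrix id g = fun i => if Crosses G X (g i) then 1 else 0 :=
    funext fun i => congrFun (indicator_vecMul_redIncMatrix hr) (g i)
  simp only [hvecMul, funext_iff, Pi.zero_apply, forall_mem_image, mem_univ, forall_const]
  exact forall_congr' fun i => by by_cases h : Crosses G X (g i) <;> simp_all [Crosses]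

theorem det_redIncMatrix_mul_transpose_eq_zero_iff (r : G.V) :
    (G.redIncMatrix r * (G.redIncMatrix r)ᵀ).det = 0 ↔ HasEulerianCut G := by
  rw [← exists_vecMul_eq_zero_iff, exists_ne_zero_iff_exists_indicator, hasEulerianCut_iff r]
  refine exists_congr fun X => and_congr_right fun hr => and_congr_right fun _ => ?_
  rw [← vecMul_vecMul, indicator_vecMul_redIncMatrix hr, vecMul_transpose, funext_iff]
  simp only [Subtype.forall, Pi.zero_apply, ← ZMod.natCast_eq_zero_iff_even]
  exact forall_congr' fun v => forall_congr' fun _ => by rw [← incMatrix_mulVec_crosses]; rfl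

theorem sum_prod_mul_det_redIncMatrix (r : G.V) (T : Finset G.E) :
    ∑ f with univ.image f = T,
      (∏ i, G.redIncMatrix r i (f i)) * ((G.redIncMatrix r)ᵀ.submatrix f id).det =
      if IsSpanningTree G T then 1 else 0 := by
  by_cases hT : #T = Fintype.card {v // v ≠ r}
  · obtain ⟨g, hg, rfl⟩ :
        ∃ g : {v // v ≠ r} → G.E, Function.Injective g ∧ univ.image g = T := by
      let e : {v // v ≠ r} ≃ T := Fintype.equivOfCardEq (by rw [Fintype.card_coe, hT])
      refine ⟨fun w => e w, Subtype.val_injective.comp e.injective, ?_⟩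
      ext x
      simp only [mem_image, mem_univ, true_and]
      exact ⟨by rintro ⟨w, rfl⟩; exact (e w).2, fun hx => ⟨e.symm ⟨x, hx⟩, by simp⟩⟩
    rw [sum_prod_mul_det_eq_det_mul_det _ _ hg, ← transpose_submatrix, det_transpose,
      isSpanningTree_image_iff hg]
    generalize ((G.redIncMatrix r).submatrix id g).det = a
    obtain rfl | rfl : a = 0 ∨ a = 1 := by revert a; decide
    all_goals simp
  · rw [sum_prod_mul_det_eq_zero_of_card_ne _ _ hT, if_neg]
    rintro ⟨-, hcard⟩
    have := Fintype.card_subtype_ne_add_one r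
    omega

theorem natCast_numSpanningTrees (r : G.V) :
    (numSpanningTrees G : ZMod 2) = (G.redIncMatrix r * (G.redIncMatrix r)ᵀ).det := by
  rw [det_mul_eq_sum_prod_mul_det, ← sum_fiberwise univ fun f => univ.image f, numSpanningTrees,
    natCast_card_filter]
  exact sum_congr rfl fun T _ => (sum_prod_mul_det_redIncMatrix r T).symm

end

end Multigraph

/-- `κ_G` is even iff `G` has an Eulerian cut. -/
theorem stmt14 (G : Multigraph) :
    Even (numSpanningTrees G) ↔ HasEulerianCut G := by
  let r := Classical.arbitrary G.V
  rw [← ZMod.natCast_eq_zero_iff_even, G.natCast_numSpanningTrees r,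
    G.det_redIncMatrix_mul_transpose_eq_zero_iff r]
end

section
/- If G is a 2-edge-connected finite connected multigraph of genus at least 2, then the natural homomorphism from Aut(G) to the group of linear automorphisms of the flow space H¹(G, ℝ) is injective. -/
open scoped Classical
open Finset

variable {G G' : Multigraph}

/-!
Let `γ = β⁻¹α` act trivially on flows, so that `ω e = ± ω (γ e)` for every flow `ω`. Suppose
`γ` moves an edge `e₀` and let `O` be its `γ`-orbit. As the genus is at least `2`, some nonzero
flow `ω` vanishes at `e₀`, hence on `O`. Its restriction to the component `K` of `G ∖ O` through
an edge where `ω ≠ 0` is again a flow fixed by `γ`, which forces `γ K = K`. Moreover `K ≠ V`: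
otherwise the form `1_{e₀} ∓ 1_{γ e₀}`, orthogonal to all flows, would be the coboundary of a
function that is constant on the connected graph `G ∖ O`. So some edges cross `K`, all of them
in `O`. If `ω₀` is a flow that is nonzero on one of them (2-edge-connectivity), the product of
`ω₀` with the coboundary of the indicator of `K` is `γ`-invariant, hence constant and nonzero
on `O` and zero elsewhere, contradicting the conservation of `ω₀` across `K`. Thus `γ` fixes
every edge, and it reverses none, since a reversed fixed edge carries no flow; so `γ = 1`.
-/

theorem Equiv.Perm.SameCycle.apply_eq_of_invariant {α β : Type*} [Finite α]
    {σ : Equiv.Perm α} {f : α → β} (hf : ∀ x, f (σ x) = f x) {x y : α} (h : σ.SameCycle x y) :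
    f x = f y := by
  obtain ⟨n, -, rfl⟩ := h.exists_nat_pow_eq
  clear h
  induction n with
  | zero => rfl
  | succ n ih => rw [ih, pow_succ', Equiv.Perm.mul_apply, hf]

namespace Multigraph

section Flows

variable (G) in
def coboundary (c : G.V → ℝ) : G.E → ℝ := fun e => c (G.ends e).2 - c (G.ends e).1

variable (G) in
noncomputable def coboundaryₗ : (G.V → ℝ) →ₗ[ℝ] EuclideanSpace ℝ G.E where
  toFun c := WithLp.toLp 2 (G.coboundary c)
  map_add' c d := by ext e; simp only [coboundary, PiLp.add_apply, Pi.add_apply]; ring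
  map_smul' a c := by
    ext e
    simp only [coboundary, PiLp.smul_apply, Pi.smul_apply, smul_eq_mul, RingHom.id_apply]
    ring

variable (G) in
noncomputable def flowSpace : Submodule ℝ (EuclideanSpace ℝ G.E) :=
  (LinearMap.range G.coboundaryₗ)ᗮ

theorem coboundary_dotProduct (c : G.V → ℝ) (ω : G.E → ℝ) :
    G.coboundary c ⬝ᵥ ω = ∑ x, c x *
      ∑ e, ((if (G.ends e).2 = x then ω e else 0) - (if (G.ends e).1 = x then ω e else 0)) := by
  simp only [Finset.mul_sum, mul_sub, mul_ite, mul_zero]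
  rw [Finset.sum_comm]
  refine Finset.sum_congr rfl fun e _ => ?_
  simp [Finset.sum_sub_distrib, coboundary, mul_comm, mul_sub]

theorem isFlow_iff_forall_coboundary_dotProduct {ω : G.E → ℝ} :
    IsFlow G ω ↔ ∀ c : G.V → ℝ, G.coboundary c ⬝ᵥ ω = 0 := by
  refine ⟨fun h c => ?_, fun h x => ?_⟩
  · simp [coboundary_dotProduct, h _]
  · simpa [coboundary_dotProduct] using h fun y => if y = x then 1 else 0

theorem isFlow_iff_mem_flowSpace {ω : G.E → ℝ} : IsFlow G ω ↔ WithLp.toLp 2 ω ∈ G.flowSpace := by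
  simp only [flowSpace, isFlow_iff_forall_coboundary_dotProduct, Submodule.mem_orthogonal,
    LinearMap.mem_range, forall_exists_index, forall_apply_eq_imp_iff]
  refine forall_congr' fun c => ?_
  rw [coboundaryₗ, LinearMap.coe_mk, AddHom.coe_mk, EuclideanSpace.inner_toLp_toLp,
    dotProduct_comm]
  simp

theorem exists_coboundary_eq {u : G.E → ℝ} (hu : ∀ ω, IsFlow G ω → u ⬝ᵥ ω = 0) :
    ∃ c, G.coboundary c = u := by
  have hmem : WithLp.toLp 2 u ∈ G.flowSpaceᗮ := by
    rw [Submodule.mem_orthogonal']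
    intro v hv
    rw [EuclideanSpace.inner_eq_star_dotProduct]
    simpa [dotProduct_comm] using hu _ (isFlow_iff_mem_flowSpace.2 (by simpa using hv))
  rw [flowSpace, Submodule.orthogonal_orthogonal] at hmem
  obtain ⟨c, hc⟩ := hmem
  exact ⟨c, congrArg WithLp.ofLp hc⟩

theorem genus_le_finrank_flowSpace : genus G ≤ Module.finrank ℝ G.flowSpace := by
  have hker : 0 < Module.finrank ℝ (LinearMap.ker G.coboundaryₗ) := by
    refine Module.finrank_pos_iff_exists_ne_zero.2 ⟨⟨fun _ => 1, ?_⟩, ?_⟩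
    · ext e; simp [coboundaryₗ, coboundary]
    · rw [ne_eq, Subtype.ext_iff, funext_iff]; simp
  have hrank := G.coboundaryₗ.finrank_range_add_finrank_ker
  have hperp := (LinearMap.range G.coboundaryₗ).finrank_add_finrank_orthogonal
  rw [Module.finrank_fintype_fun_eq_card] at hrank
  rw [finrank_euclideanSpace] at hperp
  rw [genus, flowSpace]
  omega

theorem exists_isFlow_apply_eq_zero_ne_zero (hg : 2 ≤ genus G) (p : G.E) :
    ∃ ω, IsFlow G ω ∧ ω p = 0 ∧ ω ≠ 0 := by
  let evalAt : G.flowSpace →ₗ[ℝ] ℝ := (EuclideanSpace.proj p).toLinearMap ∘ₗ G.flowSpace.subtype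
  have hker : LinearMap.ker evalAt ≠ ⊥ := LinearMap.ker_ne_bot_of_finrank_lt <| by
    have := G.genus_le_finrank_flowSpace
    rw [Module.finrank_self]
    omega
  obtain ⟨⟨v, hvW⟩, hv, hv0⟩ := Submodule.exists_mem_ne_zero_of_ne_bot hker
  refine ⟨v.ofLp, isFlow_iff_mem_flowSpace.2 hvW, hv, fun h => hv0 ?_⟩
  ext1
  exact congrArg (WithLp.toLp 2) h

variable (G) in
noncomputable def indicatorCoboundary (S : Finset G.V) : G.E → ℝ :=
  G.coboundary fun y => if y ∈ S then 1 else 0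

theorem indicatorCoboundary_ne_zero_iff {S : Finset G.V} {e : G.E} :
    G.indicatorCoboundary S e ≠ 0 ↔ Crosses G S e := by
  by_cases h1 : (G.ends e).1 ∈ S <;> by_cases h2 : (G.ends e).2 ∈ S <;>
    simp [indicatorCoboundary, coboundary, Crosses, h1, h2]

theorem _root_.IsFlow.restrict {ω : G.E → ℝ} (hω : IsFlow G ω) {S : Finset G.V}
    (hS : ∀ e, Crosses G S e → ω e = 0) :
    IsFlow G fun e => if (G.ends e).1 ∈ S then ω e else 0 := by
  rw [isFlow_iff_forall_coboundary_dotProduct] at hω ⊢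
  intro c
  convert hω fun y => if y ∈ S then c y else 0 using 1
  refine Finset.sum_congr rfl fun e _ => ?_
  have := hS e
  by_cases h1 : (G.ends e).1 ∈ S <;> by_cases h2 : (G.ends e).2 ∈ S <;>
    simp_all [coboundary, Crosses]

end Flows

section Components

variable (G) in
def IsUnionOfComponents (F : Set G.E) (S : Finset G.V) : Prop :=
  ∀ e ∈ F, ((G.ends e).1 ∈ S ↔ (G.ends e).2 ∈ S)

variable (G) in
/-- The vertex set of the component of `x` in the spanning subgraph with edge set `F`, as the
smallest union of components containing `x`. -/
noncomputable def component (F : Set G.E) (x : G.V) : Finset G.V :=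
  univ.filter fun y => ∀ S, G.IsUnionOfComponents F S → x ∈ S → y ∈ S

theorem mem_component_self (F : Set G.E) (x : G.V) : x ∈ G.component F x := by
  simp +contextual [component]

theorem component_subset {F : Set G.E} {S : Finset G.V} (hS : G.IsUnionOfComponents F S)
    {x : G.V} (hx : x ∈ S) : G.component F x ⊆ S := fun _ hy =>
  (mem_filter.1 hy).2 S hS hx

theorem isUnionOfComponents_component (F : Set G.E) (x : G.V) :
    G.IsUnionOfComponents F (G.component F x) := fun e he => by
  simp only [component, mem_filter, mem_univ, true_and]
  exact forall_congr' fun S => forall_congr' fun hS => imp_congr_right fun _ => hS e he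

/-- The form is the coboundary of some `c`, and `c` is constant along the edges of `F`. -/
theorem eq_zero_of_dotProduct_isFlow {F : Set G.E} {x : G.V}
    (hconn : ∀ S, G.IsUnionOfComponents F S → x ∈ S → S = univ) {u : G.E → ℝ}
    (hu : ∀ ω, IsFlow G ω → u ⬝ᵥ ω = 0) (hF : ∀ e ∈ F, u e = 0) : u = 0 := by
  obtain ⟨c, rfl⟩ := exists_coboundary_eq hu
  have hS := hconn (univ.filter fun y => c y = c x) (fun e he => by
    have := hF e he
    simp only [coboundary, sub_eq_zero] at this
    simp [this]) (by simp)
  have hc : ∀ y, c y = c x := fun y => by simpa using (eq_univ_iff_forall.1 hS) y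
  ext e
  simp [coboundary, hc]

theorem exists_isFlow_apply_ne_zero (h2ec : TwoEdgeConnected G) (p : G.E) :
    ∃ ω, IsFlow G ω ∧ ω p ≠ 0 := by
  by_contra! h
  have hu : (Pi.single p 1 : G.E → ℝ) = 0 := by
    refine eq_zero_of_dotProduct_isFlow (F := {e | e ≠ p}) (x := Classical.arbitrary _)
      (fun S hS hx => (h2ec p S hS).resolve_left (ne_empty_of_mem hx)) (fun ω hω => ?_)
      (fun e he => Pi.single_eq_of_ne he _)
    simp [h ω hω]
  simpa using congrFun hu p

end Components

end Multigraph

namespace GraphAut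

open Multigraph

section Action

variable (γ : GraphAut G)

noncomputable def sign (e : G.E) : ℝ :=
  if G.ends (γ.emap e) = (γ.vmap (G.ends e).1, γ.vmap (G.ends e).2) then 1 else -1

theorem sign_cases (e : G.E) :
    γ.sign e = 1 ∧ G.ends (γ.emap e) = (γ.vmap (G.ends e).1, γ.vmap (G.ends e).2) ∨
      γ.sign e = -1 ∧ G.ends (γ.emap e) = (γ.vmap (G.ends e).2, γ.vmap (G.ends e).1) := by
  unfold sign
  split_ifs with h
  · exact .inl ⟨rfl, h⟩
  · exact .inr ⟨rfl, (γ.compat e).resolve_left h⟩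

theorem sign_mul_self (e : G.E) : γ.sign e * γ.sign e = 1 := by
  rcases γ.sign_cases e with ⟨h, -⟩ | ⟨h, -⟩ <;> simp [h]

theorem sign_ne_zero (e : G.E) : γ.sign e ≠ 0 :=
  left_ne_zero_of_mul_eq_one (γ.sign_mul_self e)

theorem autPullForm_apply (ω : G.E → ℝ) (e : G.E) :
    autPullForm γ ω e = γ.sign e * ω (γ.emap e) := by
  unfold autPullForm sign
  split_ifs <;> simp

theorem coboundary_emap (c : G.V → ℝ) (e : G.E) :
    G.coboundary c (γ.emap e) = γ.sign e * G.coboundary (c ∘ γ.vmap) e := by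
  rcases γ.sign_cases e with ⟨hs, he⟩ | ⟨hs, he⟩ <;> simp [coboundary, hs, he]

theorem autPullForm_coboundary (c : G.V → ℝ) :
    autPullForm γ (G.coboundary c) = G.coboundary (c ∘ γ.vmap) := by
  funext e
  rw [autPullForm_apply, coboundary_emap, ← mul_assoc, sign_mul_self, one_mul]

theorem isFlow_autPullForm {ω : G.E → ℝ} (hω : IsFlow G ω) : IsFlow G (autPullForm γ ω) := by
  rw [isFlow_iff_forall_coboundary_dotProduct] at hω ⊢
  intro c
  have key : ∀ e, G.coboundary c e * autPullForm γ ω e =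
      G.coboundary (c ∘ γ.vmap.symm) (γ.emap e) * ω (γ.emap e) := fun e => by
    rw [coboundary_emap, autPullForm_apply, Function.comp_assoc, Equiv.symm_comp_self,
      Function.comp_id]
    ring
  simp only [dotProduct, key]
  exact (Equiv.sum_comp γ.emap fun e => G.coboundary (c ∘ γ.vmap.symm) e * ω e).trans (hω _)

variable {γ}

theorem apply_emap_of_autPullForm_eq {ω : G.E → ℝ} (h : autPullForm γ ω = ω) (e : G.E) :
    ω (γ.emap e) = γ.sign e * ω e := by
  conv_rhs => rw [← h, autPullForm_apply, ← mul_assoc, sign_mul_self, one_mul]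

theorem mul_apply_emap_of_autPullForm_eq {a b : G.E → ℝ} (ha : autPullForm γ a = a)
    (hb : autPullForm γ b = b) (e : G.E) :
    a (γ.emap e) * b (γ.emap e) = a e * b e := by
  rw [apply_emap_of_autPullForm_eq ha, apply_emap_of_autPullForm_eq hb]
  linear_combination (a e * b e) * γ.sign_mul_self e

end Action

section Group

variable (G) in
def refl : GraphAut G where
  vmap := Equiv.refl G.V
  emap := Equiv.refl G.E
  compat _ := .inl rfl

def trans (α δ : GraphAut G) : GraphAut G where
  vmap := α.vmap.trans δ.vmap
  emap := α.emap.trans δ.emap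
  compat e := by
    rcases α.compat e with h | h <;> rcases δ.compat (α.emap e) with h' | h' <;> simp [h, h']

def symm (α : GraphAut G) : GraphAut G where
  vmap := α.vmap.symm
  emap := α.emap.symm
  compat e := by
    rcases α.compat (α.emap.symm e) with h | h <;> simp only [Equiv.apply_symm_apply] at h <;>
      simp [h]

theorem ext {α δ : GraphAut G} (hv : α.vmap = δ.vmap) (he : α.emap = δ.emap) : α = δ := by
  cases α; cases δ; congr

theorem trans_symm (α : GraphAut G) : α.trans α.symm = refl G :=
  ext (Equiv.self_trans_symm _) (Equiv.self_trans_symm _)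

theorem sign_trans (α δ : GraphAut G) (e : G.E) :
    (α.trans δ).sign e = α.sign e * δ.sign (α.emap e) := by
  have := G.loopless e
  rcases α.sign_cases e with ⟨-, he⟩ | ⟨-, he⟩ <;>
    rcases δ.sign_cases (α.emap e) with ⟨-, he'⟩ | ⟨-, he'⟩ <;>
    simp [sign, trans, he, he', this, Ne.symm this]

theorem autPullForm_trans (α δ : GraphAut G) (ω : G.E → ℝ) :
    autPullForm (α.trans δ) ω = autPullForm α (autPullForm δ ω) := by
  funext e
  simp only [autPullForm_apply, sign_trans, mul_assoc]
  rfl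

theorem autPullForm_refl (ω : G.E → ℝ) : autPullForm (refl G) ω = ω := by
  funext e
  simp [autPullForm, refl]

end Group

def FixesFlows (γ : GraphAut G) : Prop := ∀ ω, IsFlow G ω → autPullForm γ ω = ω

section FixesFlows

variable {γ : GraphAut G}

theorem FixesFlows.apply_mem_component_iff (hγ : γ.FixesFlows) {O : Set G.E}
    (hO : ∀ e, γ.emap e ∈ O ↔ e ∈ O) {ω : G.E → ℝ} (hω : IsFlow G ω)
    (hωO : ∀ e ∈ O, ω e = 0) {e₁ : G.E} (he₁ : ω e₁ ≠ 0) (y : G.V) :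
    γ.vmap y ∈ G.component Oᶜ (G.ends e₁).1 ↔ y ∈ G.component Oᶜ (G.ends e₁).1 := by
  obtain ⟨K, hKdef⟩ : ∃ K, K = G.component Oᶜ (G.ends e₁).1 := ⟨_, rfl⟩
  have hK : G.IsUnionOfComponents Oᶜ K := hKdef ▸ G.isUnionOfComponents_component _ _
  have hK₁ : (G.ends e₁).1 ∈ K := hKdef ▸ mem_component_self _ _
  have hKmin : ∀ S, G.IsUnionOfComponents Oᶜ S → (G.ends e₁).1 ∈ S → K ⊆ S :=
    hKdef ▸ fun S hS hx => component_subset hS hx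
  rw [← hKdef]
  have hζ := hω.restrict (S := K) fun e he => hωO e (by_contra fun h => he (hK e h))
  have htail : (G.ends (γ.emap e₁)).1 ∈ K := by
    by_contra h
    have := apply_emap_of_autPullForm_eq (hγ _ hζ) e₁
    simp [h, hK₁, he₁, sign_ne_zero] at this
  have hhead := (hK _ ((hO e₁).not.2 fun h => he₁ (hωO e₁ h))).1 htail
  have hx : γ.vmap (G.ends e₁).1 ∈ K := by
    rcases γ.sign_cases e₁ with ⟨-, h⟩ | ⟨-, h⟩ <;> simp_all
  have hmaps : ∀ y ∈ K, γ.vmap y ∈ K := fun y hy => by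
    have hS : G.IsUnionOfComponents Oᶜ (univ.filter fun y => γ.vmap y ∈ K) := fun e he => by
      have := hK (γ.emap e) ((hO e).not.2 he)
      rcases γ.compat e with h | h <;> simp only [h] at this <;> simp [this]
    simpa using hKmin _ hS (by simpa using hx) hy
  exact ⟨fun h => by simpa using Equiv.Perm.perm_symm_on_of_perm_on_finset hmaps h, hmaps y⟩

theorem FixesFlows.component_ne_univ (hγ : γ.FixesFlows) {e₀ : G.E} (he₀ : γ.emap e₀ ≠ e₀)
    (x : G.V) : G.component {e | Equiv.Perm.SameCycle γ.emap e₀ e}ᶜ x ≠ univ := by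
  intro hK
  have hu := eq_zero_of_dotProduct_isFlow
    (fun S hS hx => univ_subset_iff.1 (hK ▸ component_subset hS hx))
    (u := Pi.single e₀ 1 - γ.sign e₀ • Pi.single (γ.emap e₀) 1) (fun ω hω => by
      simp [sub_dotProduct, apply_emap_of_autPullForm_eq (hγ ω hω), ← mul_assoc, sign_mul_self])
    (fun e he => by
      simp only [Set.mem_compl_iff, Set.mem_ofPred_eq] at he
      have h1 : e ≠ e₀ := by rintro rfl; exact he (.refl _ _)
      have h2 : e ≠ γ.emap e₀ := by
        rintro rfl; exact he (Equiv.Perm.SameCycle.refl _ _).apply_right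
      simp [Pi.single_eq_of_ne h1, Pi.single_eq_of_ne h2])
  simpa [Pi.single_eq_of_ne he₀.symm] using congrFun hu e₀

theorem FixesFlows.not_crosses (h2ec : TwoEdgeConnected G) (hγ : γ.FixesFlows)
    {K : Finset G.V} (hK : ∀ y, γ.vmap y ∈ K ↔ y ∈ K) {e₀ : G.E}
    (hcross : ∀ e, Crosses G K e → Equiv.Perm.SameCycle γ.emap e₀ e) (e : G.E) :
    ¬ Crosses G K e := by
  intro he
  obtain ⟨ω, hω, hωe⟩ := exists_isFlow_apply_ne_zero h2ec e
  have hι : autPullForm γ (G.indicatorCoboundary K) = G.indicatorCoboundary K := by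
    simp only [indicatorCoboundary, autPullForm_coboundary, Function.comp_def, hK]
  set f := fun q => G.indicatorCoboundary K q * ω q
  have hf : ∀ q, f (γ.emap q) = f q := mul_apply_emap_of_autPullForm_eq hι (hγ ω hω)
  have hsupp : ∀ q, f q = if Equiv.Perm.SameCycle γ.emap e₀ q then f e else 0 := fun q => by
    split_ifs with hq
    · exact (((hcross e he).symm.trans hq).apply_eq_of_invariant hf).symm
    · simp [f, not_not.1 (indicatorCoboundary_ne_zero_iff.not.2 fun h => hq (hcross q h))]
  have hsum : ∑ q, f q = 0 := isFlow_iff_forall_coboundary_dotProduct.1 hω _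
  rw [Finset.sum_congr rfl fun q _ => hsupp q, Finset.sum_ite, sum_const_zero, add_zero,
    sum_const, nsmul_eq_mul] at hsum
  have hcard : (univ.filter (Equiv.Perm.SameCycle γ.emap e₀)).card ≠ 0 :=
    card_ne_zero_of_mem (mem_filter.2 ⟨mem_univ _, hcross e he⟩)
  exact mul_ne_zero (Nat.cast_ne_zero.2 hcard)
    (mul_ne_zero (indicatorCoboundary_ne_zero_iff.2 he) hωe) hsum

theorem FixesFlows.emap_apply_eq_self (h2ec : TwoEdgeConnected G) (hg : 2 ≤ genus G)
    (hγ : γ.FixesFlows) (e₀ : G.E) : γ.emap e₀ = e₀ := by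
  by_contra he₀
  set O : Set G.E := {e | Equiv.Perm.SameCycle γ.emap e₀ e}
  obtain ⟨ω, hω, hωe₀, hω0⟩ := exists_isFlow_apply_eq_zero_ne_zero hg e₀
  obtain ⟨e₁, he₁⟩ := Function.ne_iff.1 hω0
  have hωO : ∀ e ∈ O, ω e = 0 := fun e he => by
    have hinv := mul_apply_emap_of_autPullForm_eq (hγ ω hω) (hγ ω hω)
    simpa [hωe₀] using (he.apply_eq_of_invariant (f := fun e => ω e * ω e) hinv).symm
  obtain ⟨r, hr⟩ : ∃ r, Crosses G (G.component Oᶜ (G.ends e₁).1) r := by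
    by_contra! h
    rcases G.conn _ fun e => not_not.1 (h e) with h | h
    · exact notMem_empty _ (h ▸ mem_component_self Oᶜ (G.ends e₁).1)
    · exact hγ.component_ne_univ he₀ _ h
  refine hγ.not_crosses h2ec
    (hγ.apply_mem_component_iff (fun _ => Equiv.Perm.sameCycle_apply_right) hω hωO he₁)
    (fun e he => by_contra fun h => he (G.isUnionOfComponents_component _ _ e h)) r hr

theorem FixesFlows.sign_eq_one (h2ec : TwoEdgeConnected G) (hγ : γ.FixesFlows) {e : G.E}
    (he : γ.emap e = e) : γ.sign e = 1 := by
  obtain ⟨ω, hω, hωe⟩ := exists_isFlow_apply_ne_zero h2ec e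
  have := apply_emap_of_autPullForm_eq (hγ ω hω) e
  rw [he] at this
  exact (mul_eq_right₀ hωe).1 this.symm

theorem FixesFlows.vmap_apply_eq_self (h2ec : TwoEdgeConnected G) (hg : 2 ≤ genus G)
    (hγ : γ.FixesFlows) (x : G.V) : γ.vmap x = x := by
  by_cases hx : ∃ e, G.Inc x e
  · obtain ⟨e, he⟩ := hx
    have hfix := hγ.emap_apply_eq_self h2ec hg e
    have hends : G.ends e = (γ.vmap (G.ends e).1, γ.vmap (G.ends e).2) := by
      rcases γ.sign_cases e with ⟨-, h⟩ | ⟨h, -⟩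
      · rwa [hfix] at h
      · norm_num [hγ.sign_eq_one h2ec hfix] at h
    rcases he with rfl | rfl
    · exact (congrArg Prod.fst hends).symm
    · exact (congrArg Prod.snd hends).symm
  · simp only [not_exists] at hx
    rcases G.conn {x} (fun e => by
      simpa using iff_of_false (fun h => hx e (.inl h)) (fun h => hx e (.inr h))) with h | h
    · exact absurd h (singleton_ne_empty x)
    · exact mem_singleton.1 (h ▸ mem_univ _)

theorem FixesFlows.eq_refl (h2ec : TwoEdgeConnected G) (hg : 2 ≤ genus G)
    (hγ : γ.FixesFlows) : γ = refl G :=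
  ext (Equiv.ext (hγ.vmap_apply_eq_self h2ec hg)) (Equiv.ext (hγ.emap_apply_eq_self h2ec hg))

end FixesFlows

end GraphAut

/-- for a 2-edge-connected graph of genus at least 2, the action of
`Aut(G)` on the flow space `H¹(G,ℝ)` is faithful. -/
theorem stmt17 (G : Multigraph) (h2ec : TwoEdgeConnected G) (hg : 2 ≤ genus G) :
    ∀ α β : GraphAut G,
      (∀ ω : G.E → ℝ, IsFlow G ω → autPullForm α ω = autPullForm β ω) → α = β := by
  intro α β h
  have hγ : (α.trans β.symm).FixesFlows := fun ω hω => by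
    rw [GraphAut.autPullForm_trans, h _ (β.symm.isFlow_autPullForm hω),
      ← GraphAut.autPullForm_trans, GraphAut.trans_symm, GraphAut.autPullForm_refl]
  have hrefl := hγ.eq_refl h2ec hg
  exact GraphAut.ext (Equiv.trans_eq_refl_iff_eq_symm.1 (congrArg GraphAut.vmap hrefl))
    (Equiv.trans_eq_refl_iff_eq_symm.1 (congrArg GraphAut.emap hrefl))
end

section
/- Let G be a 2-edge-connected graph. The canonical map ψ_G : E(G) → P(H¹(G,ℝ)), sending an edge e to the hyperplane W(e) = {ω ∈ H¹(G) : ω(e) = 0}, is injective if and only if G is 3-edge-connected. -/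
open scoped Classical
open Finset

variable {G G' : Multigraph}

/-!
A flow `ω` has zero net flow into every vertex set `S`, so if only `e₁` and `e₂` cross `S` then
`±ω(e₁) ± ω(e₂) = 0` and `W(e₁) = W(e₂)`; 2-edge-connectivity guarantees that both edges really
cross. Conversely, flows are the annihilator of the coboundaries, so `W(e₁) ⊆ W(e₂)` makes
`δ_{e₂} - l δ_{e₁}` a coboundary `dc`; then `c` is constant across every edge but `e₁, e₂`, and by
3-edge-connectivity also across `e₂`, contradicting `(dc)(e₂) = 1`.
-/

namespace Multigraph

variable (G : Multigraph)

noncomputable def incidence (x : G.V) (e : G.E) : ℝ :=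
  (if (G.ends e).2 = x then 1 else 0) - (if (G.ends e).1 = x then 1 else 0)

noncomputable def netFlow (x : G.V) : (G.E → ℝ) →ₗ[ℝ] ℝ :=
  ∑ e, G.incidence x e • LinearMap.proj e

/-- The hyperplane `W(e)`. -/
def flowKernel (e : G.E) : Set (G.E → ℝ) :=
  {ω | IsFlow G ω ∧ ω e = 0}

variable {G}

lemma netFlow_apply (x : G.V) (ω : G.E → ℝ) :
    G.netFlow x ω = ∑ e, G.incidence x e * ω e := by
  simp [netFlow]

lemma isFlow_iff_forall_netFlow_eq_zero {ω : G.E → ℝ} :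
    IsFlow G ω ↔ ∀ x, G.netFlow x ω = 0 := by
  simp only [IsFlow, netFlow_apply, incidence, sub_mul, ite_mul, one_mul, zero_mul]

lemma netFlow_single (x : G.V) (e : G.E) : G.netFlow x (Pi.single e 1) = G.incidence x e := by
  simp [netFlow_apply, Pi.single_apply]

lemma sum_mul_incidence (c : G.V → ℝ) (e : G.E) :
    ∑ x, c x * G.incidence x e = c (G.ends e).2 - c (G.ends e).1 := by
  simp [incidence, mul_sub]

lemma sum_incidence_of_iff {S : Finset G.V} {e : G.E}
    (he : (G.ends e).1 ∈ S ↔ (G.ends e).2 ∈ S) : ∑ x ∈ S, G.incidence x e = 0 := by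
  simp [incidence, Finset.sum_sub_distrib, he]

lemma sum_incidence_ne_zero {S : Finset G.V} {e : G.E} (he : Crosses G S e) :
    ∑ x ∈ S, G.incidence x e ≠ 0 := by
  unfold Crosses at he
  by_cases h : (G.ends e).1 ∈ S <;> simp_all [incidence, Finset.sum_sub_distrib]

/-- The net flow into a vertex set is carried by the edges crossing it. -/
lemma sum_netFlow (S : Finset G.V) (ω : G.E → ℝ) :
    ∑ x ∈ S, G.netFlow x ω = ∑ e, (∑ x ∈ S, G.incidence x e) * ω e := by
  simp only [netFlow_apply, Finset.sum_mul]
  exact Finset.sum_comm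

end Multigraph

open Multigraph

section

variable {G : Multigraph}

lemma IsFlow.sum_cut_pair {ω : G.E → ℝ} (hω : IsFlow G ω) {S : Finset G.V} {e₁ e₂ : G.E}
    (hne : e₁ ≠ e₂) (hS : ∀ e, e ≠ e₁ → e ≠ e₂ → ((G.ends e).1 ∈ S ↔ (G.ends e).2 ∈ S)) :
    (∑ x ∈ S, G.incidence x e₁) * ω e₁ + (∑ x ∈ S, G.incidence x e₂) * ω e₂ = 0 := by
  calc _ = ∑ e ∈ {e₁, e₂}, (∑ x ∈ S, G.incidence x e) * ω e := (Finset.sum_pair hne).symm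
    _ = ∑ e, (∑ x ∈ S, G.incidence x e) * ω e := by
      refine Finset.sum_subset (Finset.subset_univ _) fun e _ he => ?_
      simp only [Finset.mem_insert, Finset.mem_singleton, not_or] at he
      rw [sum_incidence_of_iff (hS e he.1 he.2), zero_mul]
    _ = ∑ x ∈ S, G.netFlow x ω := (sum_netFlow S ω).symm
    _ = 0 := Finset.sum_eq_zero fun x _ => isFlow_iff_forall_netFlow_eq_zero.1 hω x

lemma flowKernel_eq_of_cut {S : Finset G.V} {e₁ e₂ : G.E} (hne : e₁ ≠ e₂)
    (h₁ : Crosses G S e₁) (h₂ : Crosses G S e₂)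
    (hS : ∀ e, e ≠ e₁ → e ≠ e₂ → ((G.ends e).1 ∈ S ↔ (G.ends e).2 ∈ S)) :
    G.flowKernel e₁ = G.flowKernel e₂ := by
  ext ω
  refine and_congr_right fun hω => ?_
  have hcut := hω.sum_cut_pair hne hS
  constructor <;> intro h
  · simpa [h, sum_incidence_ne_zero h₂] using hcut
  · simpa [h, sum_incidence_ne_zero h₁] using hcut

lemma TwoEdgeConnected.crosses_of_cut (h : TwoEdgeConnected G) {S : Finset G.V} {e₁ e₂ : G.E}
    (hS₀ : S ≠ ∅) (hS₁ : S ≠ Finset.univ)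
    (hS : ∀ e, e ≠ e₁ → e ≠ e₂ → ((G.ends e).1 ∈ S ↔ (G.ends e).2 ∈ S)) :
    Crosses G S e₁ := by
  intro he₁
  refine (h e₂ S fun e he₂ => ?_).elim hS₀ hS₁
  by_cases he : e = e₁
  · exact he ▸ he₁
  · exact hS e he he₂

/-- `ω ↦ ω e₂` vanishes on the common kernel of `ω ↦ ω e₁` and the `netFlow x`, so it is a linear
combination of them; evaluating on the basis vectors gives `l` and the potential `c`. -/
lemma exists_coboundary_of_flowKernel_subset {e₁ e₂ : G.E}
    (h : G.flowKernel e₁ ⊆ G.flowKernel e₂) :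
    ∃ (l : ℝ) (c : G.V → ℝ), ∀ e, (Pi.single e₂ 1 : G.E → ℝ) e =
      l * (Pi.single e₁ 1 : G.E → ℝ) e + (c (G.ends e).2 - c (G.ends e).1) := by
  let L : Option G.V → (G.E → ℝ) →ₗ[ℝ] ℝ := fun i => i.elim (LinearMap.proj e₁) G.netFlow
  have hker : ⨅ i, LinearMap.ker (L i) ≤ LinearMap.ker (LinearMap.proj e₂) := by
    intro ω hω
    simp only [Submodule.mem_iInf, LinearMap.mem_ker, Option.forall] at hω
    exact (h ⟨isFlow_iff_forall_netFlow_eq_zero.2 hω.2, hω.1⟩).2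
  obtain ⟨a, ha⟩ := (Submodule.mem_span_range_iff_exists_fun ℝ).1 (mem_span_of_iInf_ker_le_ker hker)
  refine ⟨a none, a ∘ some, fun e => ?_⟩
  have := LinearMap.congr_fun ha (Pi.single e 1)
  simp only [Fintype.sum_option, LinearMap.add_apply, LinearMap.sum_apply,
    LinearMap.smul_apply, smul_eq_mul, L, Option.elim, netFlow_single, sum_mul_incidence,
    LinearMap.proj_apply] at this
  rw [Pi.single_comm e₂, Pi.single_comm e₁]
  exact this.symm

/-- The level set of `c` through the head of `e₂` can only be crossed by `e₁` and `e₂`. -/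
lemma ThreeEdgeConnected.apply_ends_eq {α : Type*} (h : ThreeEdgeConnected G) (c : G.V → α)
    {e₁ e₂ : G.E} (hc : ∀ e, e ≠ e₁ → e ≠ e₂ → c (G.ends e).1 = c (G.ends e).2) :
    c (G.ends e₂).1 = c (G.ends e₂).2 := by
  let S := Finset.univ.filter fun y => c y = c (G.ends e₂).2
  rcases h e₁ e₂ S fun e h₁ h₂ => by simp [S, hc e h₁ h₂] with hS | hS
  · simpa [S] using Finset.eq_empty_iff_forall_notMem.1 hS (G.ends e₂).2
  · simpa [S] using Finset.eq_univ_iff_forall.1 hS (G.ends e₂).1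

lemma ThreeEdgeConnected.eq_of_flowKernel_subset (h : ThreeEdgeConnected G) {e₁ e₂ : G.E}
    (hW : G.flowKernel e₁ ⊆ G.flowKernel e₂) : e₁ = e₂ := by
  by_contra hne
  obtain ⟨l, c, hc⟩ := exists_coboundary_of_flowKernel_subset hW
  have hconst : ∀ e, e ≠ e₁ → e ≠ e₂ → c (G.ends e).1 = c (G.ends e).2 := fun e h₁ h₂ => by
    have := hc e
    rw [Pi.single_eq_of_ne h₁, Pi.single_eq_of_ne h₂, mul_zero, zero_add] at this
    linarith
  have he₂ := hc e₂
  rw [Pi.single_eq_same, Pi.single_eq_of_ne' hne, mul_zero, zero_add,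
    h.apply_ends_eq c hconst, sub_self] at he₂
  exact one_ne_zero he₂

end

/-- for a 2-edge-connected graph, the canonical map
`e ↦ W(e) = {ω ∈ H¹(G,ℝ) : ω(e) = 0}` is injective iff `G` is 3-edge-connected. -/
theorem stmt19 (G : Multigraph) (h2ec : TwoEdgeConnected G) :
    (∀ e₁ e₂ : G.E,
      {ω : G.E → ℝ | IsFlow G ω ∧ ω e₁ = 0} = {ω : G.E → ℝ | IsFlow G ω ∧ ω e₂ = 0} →
      e₁ = e₂) ↔ ThreeEdgeConnected G := by
  refine ⟨fun hinj e₁ e₂ S hS => ?_, fun h3ec e₁ e₂ hW => h3ec.eq_of_flowKernel_subset hW.le⟩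
  by_contra hS'
  obtain ⟨hS₀, hS₁⟩ := not_or.1 hS'
  have hne : e₁ ≠ e₂ := by
    rintro rfl
    exact hS' (h2ec e₁ S fun e he => hS e he he)
  have h₁ := h2ec.crosses_of_cut hS₀ hS₁ hS
  have h₂ := h2ec.crosses_of_cut hS₀ hS₁ fun e he₂ he₁ => hS e he₁ he₂
  exact hne (hinj e₁ e₂ (flowKernel_eq_of_cut hne h₁ h₂ hS))
end
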